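/- Let f, g, F, G ∈ X + X²ℂ[[X]] satisfy F = f·F' and G = g·G' (i.e. 𝔗F = f and 𝔗G = g, so F = 𝔗⁻¹f and G = 𝔗⁻¹g), together with f·F = g·G. Then there exists a constant A ∈ ℂ such that g = f·(1 + A·F). (This is the key lemma in Proposition 2.5: the identity f·𝔗⁻¹f = g·𝔗⁻¹g forces g = f·(1 + A·𝔗⁻¹f), equivalently 𝔗⁻²g = e^{AX}·𝔗⁻²f.) -/

import Mathlib

/-!
Eliminating `f` and `g` from `F = f·F'`, `G = g·G'` and `f·F = g·G` leaves `F'·G² = G'·F²`,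
i.e. `(1/G - 1/F)' = 0`. Writing `F = X·u`, `G = X·v` with `u, v` units, this says that
`w = 1/v - 1/u` satisfies `X·w' = w`, which forces `w = A·X`; hence `F - G = A·F·G`, so
`F = G·(1 + A·F)`, and dividing `f·F = g·G` by `G` gives `g = f·(1 + A·F)`.
-/

open PowerSeries

section CommRing

variable {R : Type*} [CommRing R]

theorem coeff_X_mul_derivative (w : R⟦X⟧) (n : ℕ) :
    coeff n (X * d⁄dX R w) = n * coeff n w := by
  cases n with
  | zero => simp
  | succ n => rw [coeff_succ_X_mul, coeff_derivative, mul_comm, Nat.cast_succ]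

theorem eq_C_mul_X_of_X_mul_derivative_eq [IsDomain R] [CharZero R] {w : R⟦X⟧}
    (h : X * d⁄dX R w = w) : w = C (coeff 1 w) * X := by
  ext n
  rw [coeff_C_mul, coeff_X]
  split_ifs with hn
  · rw [hn, mul_one]
  · have hcoeff : ((n : R) - 1) * coeff n w = 0 := by
      linear_combination congrArg (coeff n) h - coeff_X_mul_derivative w n
    have hn' : (n : R) - 1 ≠ 0 := by
      rw [sub_ne_zero, ← Nat.cast_one, Ne, Nat.cast_inj]
      exact hn
    simpa [hn'] using hcoeff

end CommRing

section Field

variable {K : Type*} [Field K] [CharZero K]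

theorem exists_sub_eq_C_mul_X_mul_mul {u v : K⟦X⟧}
    (hu : constantCoeff u ≠ 0) (hv : constantCoeff v ≠ 0)
    (h : X * (d⁄dX K u * v ^ 2 - d⁄dX K v * u ^ 2) = u * v * (u - v)) :
    ∃ A : K, u - v = C A * X * (u * v) := by
  have hu' := PowerSeries.mul_inv_cancel u hu
  have hv' := PowerSeries.mul_inv_cancel v hv
  have hw : X * d⁄dX K (v⁻¹ - u⁻¹) = v⁻¹ - u⁻¹ := by
    rw [map_sub, derivative_inv', derivative_inv']
    -- `h` divided by `u²v²`
    grind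
  refine ⟨coeff 1 (v⁻¹ - u⁻¹), ?_⟩
  rw [← eq_C_mul_X_of_X_mul_derivative_eq hw]
  linear_combination v * hu' - u * hv'

theorem exists_sub_eq_C_mul_mul_of_derivative_mul_sq_eq {F G : K⟦X⟧}
    (hF0 : coeff 0 F = 0) (hF1 : coeff 1 F ≠ 0) (hG0 : coeff 0 G = 0) (hG1 : coeff 1 G ≠ 0)
    (h : d⁄dX K F * G ^ 2 = d⁄dX K G * F ^ 2) :
    ∃ A : K, F - G = C A * (F * G) := by
  obtain ⟨u, rfl⟩ : X ∣ F := X_dvd_iff.mpr (by rwa [← coeff_zero_eq_constantCoeff_apply])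
  obtain ⟨v, rfl⟩ : X ∣ G := X_dvd_iff.mpr (by rwa [← coeff_zero_eq_constantCoeff_apply])
  rw [← zero_add 1, coeff_succ_X_mul, coeff_zero_eq_constantCoeff_apply] at hF1 hG1
  have hX2 : (X : K⟦X⟧) ^ 2 *
      (X * (d⁄dX K u * v ^ 2 - d⁄dX K v * u ^ 2) - u * v * (u - v)) = 0 := by
    simp only [Derivation.leibniz, derivative_X, smul_eq_mul] at h
    linear_combination h
  have huv := sub_eq_zero.mp ((mul_eq_zero.mp hX2).resolve_left (pow_ne_zero 2 X_ne_zero))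
  obtain ⟨A, hA⟩ := exists_sub_eq_C_mul_X_mul_mul hF1 hG1 huv
  exact ⟨A, by linear_combination X * hA⟩

end Field

theorem statement14_general (f g F G : PowerSeries ℂ)
    (hF0 : coeff 0 F = 0) (hF1 : coeff 1 F = 1)
    (hG0 : coeff 0 G = 0) (hG1 : coeff 1 G = 1)
    (hF : F = f * d⁄dX ℂ F) (hG : G = g * d⁄dX ℂ G)
    (hfg : f * F = g * G) :
    ∃ A : ℂ, g = f * (1 + C A * F) := by
  have hderiv : d⁄dX ℂ F * G ^ 2 = d⁄dX ℂ G * F ^ 2 := by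
    linear_combination (d⁄dX ℂ F * G) * hG - (d⁄dX ℂ G * F) * hF
      - (d⁄dX ℂ F * d⁄dX ℂ G) * hfg
  obtain ⟨A, hA⟩ := exists_sub_eq_C_mul_mul_of_derivative_mul_sq_eq hF0 (by simp [hF1]) hG0
    (by simp [hG1]) hderiv
  have hG_ne : G ≠ 0 := fun hG_zero ↦ by simp [hG_zero] at hG1
  refine ⟨A, mul_right_cancel₀ hG_ne ?_⟩
  linear_combination -hfg + f * hA

/-- **Key lemma in Proposition 2.5.** Let `f, g ∈ X + X²ℂ[[X]]` with 𝔗-preimages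
`F = 𝔗⁻¹f` and `G = 𝔗⁻¹g` (normalized series with `F = f·F'`, `G = g·G'`).
If `f·F = g·G`, then `g = f·(1 + A·F)` for some constant `A ∈ ℂ`
(equivalently `𝔗⁻²g = e^{AX}·𝔗⁻²f`). -/
theorem statement14 (f g F G : PowerSeries ℂ)
    (hf0 : coeff 0 f = 0) (hf1 : coeff 1 f = 1)
    (hg0 : coeff 0 g = 0) (hg1 : coeff 1 g = 1)
    (hF0 : coeff 0 F = 0) (hF1 : coeff 1 F = 1)
    (hG0 : coeff 0 G = 0) (hG1 : coeff 1 G = 1)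
    (hF : F = f * d⁄dX ℂ F) (hG : G = g * d⁄dX ℂ G)
    (hfg : f * F = g * G) :
    ∃ A : ℂ, g = f * (1 + C A * F) :=
  statement14_general f g F G hF0 hF1 hG0 hG1 hF hG hfg
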